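/- Let g : B → C be a surjective homomorphism of modules over a ring R, and suppose C is countably generated. Assume g has the following lifting property: for every finite tuple b in B and c in C with g(b) = c such that b and c satisfy exactly the same pp-formulas (positive primitive formulas) in B and C respectively, and for every element c' ∈ C, there exists b' ∈ B with g(b') = c' and such that (b, b') and (c, c') satisfy the same pp-formulas. Then g splits, i.e., there is a module homomorphism h : C → B with g ∘ h = id_C. -/
import Mathlib


/-- A tuple `x : Fin n → M` satisfies the pp-formula (positive primitive formula)
given by the matrix `A : Matrix (Fin k) (Fin n ⊕ Fin m) R` (that is, the formula
`∃ y, A ⬝ (x, y)ᵀ = 0`) in the `R`-module `M`. -/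
def PPSat {R : Type*} [Ring R] {M : Type*} [AddCommGroup M] [Module R M]
    {n k m : ℕ} (A : Matrix (Fin k) (Fin n ⊕ Fin m) R) (x : Fin n → M) : Prop :=
  ∃ y : Fin m → M, ∀ i : Fin k,
    (∑ j : Fin n, A i (Sum.inl j) • x j) + (∑ j : Fin m, A i (Sum.inr j) • y j) = 0

section Aux

variable {R B C : Type*} [Ring R] [AddCommGroup B] [Module R B]
  [AddCommGroup C] [Module R C]

/-- The tuple `b` is a "good" partial lift of the sequence `f`. -/
def GoodTup (g : B →ₗ[R] C) (f : ℕ → C) (n : ℕ) (b : Fin n → B) : Prop :=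
  (∀ i, g (b i) = f i) ∧
  ∀ (k m : ℕ) (A : Matrix (Fin k) (Fin n ⊕ Fin m) R),
    PPSat A b ↔ PPSat A (fun i : Fin n => f (i : ℕ))

theorem goodTup_zero (g : B →ₗ[R] C) (f : ℕ → C) :
    GoodTup g f 0 (fun _ => 0) := by
  refine ⟨fun i => i.elim0, fun k m A => ?_⟩
  constructor <;> intro _ <;> exact ⟨0, fun i => by simp⟩

omit [AddCommGroup C] in
theorem snoc_natCast (f : ℕ → C) (n : ℕ) :
    (Fin.snoc (fun i : Fin n => f (i : ℕ)) (f n) : Fin (n + 1) → C)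
      = fun i : Fin (n + 1) => f (i : ℕ) := by
  funext i
  refine Fin.lastCases ?_ ?_ i
  · simp
  · intro j; simp

theorem goodTup_step (g : B →ₗ[R] C)
    (hlift : ∀ (n : ℕ) (b : Fin n → B) (c : Fin n → C),
      (∀ i, g (b i) = c i) →
      (∀ (k m : ℕ) (A : Matrix (Fin k) (Fin n ⊕ Fin m) R), PPSat A b ↔ PPSat A c) →
      ∀ c' : C, ∃ b' : B, g b' = c' ∧
        ∀ (k m : ℕ) (A : Matrix (Fin k) (Fin (n + 1) ⊕ Fin m) R),
          PPSat A (Fin.snoc b b') ↔ PPSat A (Fin.snoc c c'))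
    (f : ℕ → C) (n : ℕ) (b : Fin n → B) (hb : GoodTup g f n b) :
    ∃ b' : B, GoodTup g f (n + 1) (Fin.snoc b b') := by
  obtain ⟨b', hgb', hpp⟩ :=
    hlift n b (fun i : Fin n => f (i : ℕ)) hb.1 hb.2 (f n)
  refine ⟨b', ?_, ?_⟩
  · intro i
    refine Fin.lastCases ?_ ?_ i
    · simpa using hgb'
    · intro j; simpa using hb.1 j
  · intro k m A
    rw [hpp, snoc_natCast]

/-- A coherent sequence of good tuples, built by recursion with choice. -/
noncomputable def goodSeq (g : B →ₗ[R] C)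
    (hlift : ∀ (n : ℕ) (b : Fin n → B) (c : Fin n → C),
      (∀ i, g (b i) = c i) →
      (∀ (k m : ℕ) (A : Matrix (Fin k) (Fin n ⊕ Fin m) R), PPSat A b ↔ PPSat A c) →
      ∀ c' : C, ∃ b' : B, g b' = c' ∧
        ∀ (k m : ℕ) (A : Matrix (Fin k) (Fin (n + 1) ⊕ Fin m) R),
          PPSat A (Fin.snoc b b') ↔ PPSat A (Fin.snoc c c'))
    (f : ℕ → C) : ∀ n : ℕ, { b : Fin n → B // GoodTup g f n b }
  | 0 => ⟨fun _ => 0, goodTup_zero g f⟩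
  | n + 1 =>
    ⟨Fin.snoc (goodSeq g hlift f n).1
        (goodTup_step g hlift f n (goodSeq g hlift f n).1 (goodSeq g hlift f n).2).choose,
      (goodTup_step g hlift f n (goodSeq g hlift f n).1 (goodSeq g hlift f n).2).choose_spec⟩

theorem goodSeq_coherent (g : B →ₗ[R] C)
    (hlift : ∀ (n : ℕ) (b : Fin n → B) (c : Fin n → C),
      (∀ i, g (b i) = c i) →
      (∀ (k m : ℕ) (A : Matrix (Fin k) (Fin n ⊕ Fin m) R), PPSat A b ↔ PPSat A c) →
      ∀ c' : C, ∃ b' : B, g b' = c' ∧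
        ∀ (k m : ℕ) (A : Matrix (Fin k) (Fin (n + 1) ⊕ Fin m) R),
          PPSat A (Fin.snoc b b') ↔ PPSat A (Fin.snoc c c'))
    (f : ℕ → C) (n : ℕ) (i : Fin n) :
    (goodSeq g hlift f (n + 1)).1 i.castSucc = (goodSeq g hlift f n).1 i := by
  show (Fin.snoc (goodSeq g hlift f n).1 _ : Fin (n + 1) → B) i.castSucc = _
  rw [Fin.snoc_castSucc]

theorem goodSeq_eval (g : B →ₗ[R] C)
    (hlift : ∀ (n : ℕ) (b : Fin n → B) (c : Fin n → C),
      (∀ i, g (b i) = c i) →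
      (∀ (k m : ℕ) (A : Matrix (Fin k) (Fin n ⊕ Fin m) R), PPSat A b ↔ PPSat A c) →
      ∀ c' : C, ∃ b' : B, g b' = c' ∧
        ∀ (k m : ℕ) (A : Matrix (Fin k) (Fin (n + 1) ⊕ Fin m) R),
          PPSat A (Fin.snoc b b') ↔ PPSat A (Fin.snoc c c'))
    (f : ℕ → C) : ∀ (n : ℕ) (i : Fin n),
      (goodSeq g hlift f n).1 i
        = (goodSeq g hlift f ((i : ℕ) + 1)).1 (Fin.last (i : ℕ)) := by
  intro n
  induction n with
  | zero => exact fun i => i.elim0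
  | succ m ih =>
    intro i
    refine Fin.lastCases ?_ ?_ i
    · simp
    · intro j
      rw [goodSeq_coherent g hlift f m j, ih j]
      simp

end Aux

/-- Strict uniform epimorphisms onto countably generated modules split. -/
theorem stmt_0 {R B C : Type*} [Ring R] [AddCommGroup B] [Module R B]
    [AddCommGroup C] [Module R C]
    (g : B →ₗ[R] C) (hsurj : Function.Surjective g)
    (hcg : ∃ S : Set C, S.Countable ∧ Submodule.span R S = ⊤)
    (hlift : ∀ (n : ℕ) (b : Fin n → B) (c : Fin n → C),
      (∀ i, g (b i) = c i) →
      (∀ (k m : ℕ) (A : Matrix (Fin k) (Fin n ⊕ Fin m) R), PPSat A b ↔ PPSat A c) →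
      ∀ c' : C, ∃ b' : B, g b' = c' ∧
        ∀ (k m : ℕ) (A : Matrix (Fin k) (Fin (n + 1) ⊕ Fin m) R),
          PPSat A (Fin.snoc b b') ↔ PPSat A (Fin.snoc c c')) :
    ∃ h : C →ₗ[R] B, g.comp h = LinearMap.id := by
  classical
  obtain ⟨S, hSc, hSspan⟩ := hcg
  -- enumerate a generating sequence
  obtain ⟨f, hfspan⟩ : ∃ f : ℕ → C, Submodule.span R (Set.range f) = ⊤ := by
    have h1 : (S ∪ {0} : Set C).Countable := hSc.union (Set.countable_singleton 0)
    obtain ⟨f, hf⟩ := h1.exists_eq_range ⟨0, Or.inr rfl⟩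
    refine ⟨f, ?_⟩
    rw [← hf, Submodule.span_union, hSspan]
    simp
  -- the lifted sequence
  set bseq : ℕ → B := fun n => (goodSeq g hlift f (n + 1)).1 (Fin.last n) with hbseq
  have hgb : ∀ n, g (bseq n) = f n := by
    intro n
    have := (goodSeq g hlift f (n + 1)).2.1 (Fin.last n)
    simpa using this
  set F : (ℕ →₀ R) →ₗ[R] C := Finsupp.linearCombination R f with hF
  set G : (ℕ →₀ R) →ₗ[R] B := Finsupp.linearCombination R bseq with hG
  have hFsurj : Function.Surjective F := by
    rw [← LinearMap.range_eq_top, hF, Finsupp.range_linearCombination, hfspan]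
  have hker : LinearMap.ker F ≤ LinearMap.ker G := by
    intro l hl
    rw [LinearMap.mem_ker] at hl ⊢
    -- bound the support
    obtain ⟨n, hn⟩ : ∃ n : ℕ, l.support ⊆ Finset.range n :=
      l.support.exists_nat_subset_range
    have hsubf : (∑ j : Fin n, l (j : ℕ) • f (j : ℕ)) = F l := by
      rw [hF, Finsupp.linearCombination_apply,
        Finsupp.sum_of_support_subset l hn (fun i a => a • f i) (fun i _ => zero_smul R (f i)),
        ← Fin.sum_univ_eq_sum_range (fun i => l i • f i) n]
    have hsubb : (∑ j : Fin n, l (j : ℕ) • (goodSeq g hlift f n).1 j) = G l := by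
      have : ∀ j : Fin n, (goodSeq g hlift f n).1 j = bseq (j : ℕ) := by
        intro j
        rw [goodSeq_eval g hlift f n j]
      simp_rw [this]
      rw [hG, Finsupp.linearCombination_apply,
        Finsupp.sum_of_support_subset l hn (fun i a => a • bseq i)
          (fun i _ => zero_smul R (bseq i)),
        ← Fin.sum_univ_eq_sum_range (fun i => l i • bseq i) n]
    -- the pp-formula expressing the linear relation
    set A : Matrix (Fin 1) (Fin n ⊕ Fin 0) R :=
      fun _ j => Sum.elim (fun j : Fin n => l (j : ℕ)) (fun j : Fin 0 => j.elim0) j with hA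
    have hC : PPSat A (fun i : Fin n => f (i : ℕ)) := by
      refine ⟨fun j => j.elim0, fun i => ?_⟩
      simp only [hA, Sum.elim_inl]
      rw [Fin.sum_univ_zero, add_zero, hsubf, hl]
    have hB : PPSat A (goodSeq g hlift f n).1 :=
      ((goodSeq g hlift f n).2.2 1 0 A).mpr hC
    obtain ⟨y, hy⟩ := hB
    have := hy 0
    simp only [hA, Sum.elim_inl] at this
    rw [Fin.sum_univ_zero, add_zero] at this
    rw [← hsubb]
    exact this
  -- assemble the splitting
  set e := F.quotKerEquivOfSurjective hFsurj with he
  set h : C →ₗ[R] B := (Submodule.liftQ (LinearMap.ker F) G hker).comp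
    (e.symm : C →ₗ[R] _) with hh
  refine ⟨h, ?_⟩
  ext c
  obtain ⟨l, rfl⟩ := hFsurj c
  have hmk : e (Submodule.Quotient.mk l) = F l := rfl
  have hsymm : e.symm (F l) = Submodule.Quotient.mk l := by
    rw [← hmk, LinearEquiv.symm_apply_apply]
  have hGl : h (F l) = G l := by
    rw [hh]
    simp only [LinearMap.comp_apply, LinearEquiv.coe_coe]
    rw [hsymm]
    rfl
  simp only [LinearMap.comp_apply, LinearMap.id_apply]
  rw [hGl, hG, Finsupp.apply_linearCombination]
  rw [hF]
  have hcomp : ⇑g ∘ bseq = f := funext hgb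
  rw [hcomp]
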